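/- Let Λ ⊂ ℝ^n be a lattice of rank r and Λ* its dual lattice inside span_ℝ(Λ). Then for each 1 ≤ k ≤ r, the successive minima satisfy 1 ≤ s_k(Λ)·s_{r−k+1}(Λ*). -/

import Mathlib

/-!
If `v₁, …, v_k ∈ Λ` and `w₁, …, w_{r-k+1} ∈ Λ*` are linearly independent, they cannot span
mutually orthogonal subspaces of the `r`-dimensional space `span_ℝ Λ`, so some `⟪w_j, v_i⟫` is a
nonzero integer and `‖w_j‖ ‖v_i‖ ≥ 1`. Taking infima gives the bound; both infima are over
nonempty sets since `Λ` contains the basis `B` and `Λ*` its dual basis.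
-/

open scoped BigOperators RealInnerProductSpace

/-- The `k`-th successive minimum of a set `Λ ⊂ ℝ^n`. -/
noncomputable def succMin {n : ℕ} (Λ : Set (EuclideanSpace ℝ (Fin n))) (k : ℕ) : ℝ :=
  sInf {σ : ℝ | 0 < σ ∧ ∃ v : Fin k → EuclideanSpace ℝ (Fin n),
    (∀ i, v i ∈ Λ) ∧ LinearIndependent ℝ v ∧ ∀ i, ‖v i‖ ≤ σ}

open Module Submodule Set

section InnerProductSpace

variable {E : Type*} [NormedAddCommGroup E] [InnerProductSpace ℝ E]

theorem exists_inner_ne_zero_of_finrank_lt {V : Submodule ℝ E} [FiniteDimensional ℝ V]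
    {k m : ℕ} {v : Fin k → E} {w : Fin m → E} (hv : LinearIndependent ℝ v)
    (hw : LinearIndependent ℝ w) (hvV : ∀ i, v i ∈ V) (hwV : ∀ j, w j ∈ V)
    (hlt : finrank ℝ V < k + m) : ∃ i j, ⟪w j, v i⟫ ≠ 0 := by
  by_contra! h
  have hortho : span ℝ (range v) ⟂ span ℝ (range w) := by
    rw [isOrtho_span]
    rintro _ ⟨i, rfl⟩ _ ⟨j, rfl⟩
    rw [real_inner_comm]
    exact h i j
  have hle : span ℝ (range (Sum.elim v w)) ≤ V := by
    rw [span_le, Sum.elim_range]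
    rintro x (⟨i, rfl⟩ | ⟨j, rfl⟩)
    exacts [hvV i, hwV j]
  have hcard := finrank_mono hle
  rw [finrank_span_eq_card (hv.sum_type hw hortho.disjoint), Fintype.card_sum,
    Fintype.card_fin, Fintype.card_fin] at hcard
  omega

theorem linearIndependent_of_inner_eq_ite {ι : Type*} [Fintype ι] [DecidableEq ι]
    {w u : ι → E} (h : ∀ i j, ⟪w i, u j⟫ = if i = j then 1 else 0) :
    LinearIndependent ℝ w := by
  rw [Fintype.linearIndependent_iff]
  intro c hc j
  have := congrArg (fun x => ⟪x, u j⟫) hc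
  simpa [sum_inner, real_inner_smul_left, h] using this

theorem LinearIndependent.exists_inner_eq_ite {ι : Type*} [Fintype ι] [DecidableEq ι]
    {B : ι → E} (hB : LinearIndependent ℝ B) :
    ∃ w : ι → E, (∀ i, w i ∈ span ℝ (range B)) ∧
      ∀ i j, ⟪w i, B j⟫ = if i = j then 1 else 0 := by
  have : FiniteDimensional ℝ (span ℝ (range B)) := .span_of_finite ℝ (finite_range B)
  let b : Basis ι ℝ (span ℝ (range B)) := .span hB
  let w i := (InnerProductSpace.toDual ℝ _).symm (b.coord i).toContinuousLinearMap
  refine ⟨fun i => (w i : E), fun i => (w i).2, fun i j => ?_⟩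
  have hbj : (b j : E) = B j := congrArg Subtype.val (Basis.span_apply hB j)
  rw [← hbj, ← Submodule.coe_inner, InnerProductSpace.toDual_symm_apply]
  simp [Finsupp.single_apply, eq_comm]

theorem exists_int_inner_of_mem_span_int {ι : Type*} {B : ι → E} {x : E}
    (hx : ∀ i, ∃ m : ℤ, ⟪x, B i⟫ = m) {y : E} (hy : y ∈ span ℤ (range B)) :
    ∃ m : ℤ, ⟪x, y⟫ = m := by
  induction hy using Submodule.span_induction with
  | mem y hy =>
    obtain ⟨i, rfl⟩ := hy
    exact hx i
  | zero => exact ⟨0, by simp⟩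
  | add y z _ _ hy hz =>
    obtain ⟨a, ha⟩ := hy
    obtain ⟨b, hb⟩ := hz
    exact ⟨a + b, by rw [inner_add_right, ha, hb]; push_cast; ring⟩
  | smul c y _ hy =>
    obtain ⟨a, ha⟩ := hy
    exact ⟨c * a, by rw [← Int.cast_smul_eq_zsmul ℝ, real_inner_smul_right, ha]; push_cast; ring⟩

end InnerProductSpace

theorem one_le_sInf_mul_sInf {S T : Set ℝ} (hS : S.Nonempty) (hT : T.Nonempty)
    (hTpos : ∀ τ ∈ T, 0 < τ) (h : ∀ σ ∈ S, ∀ τ ∈ T, 1 ≤ σ * τ) : 1 ≤ sInf S * sInf T := by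
  have hinv : ∀ τ ∈ T, τ⁻¹ ≤ sInf S := fun τ hτ =>
    le_csInf hS fun σ hσ => (inv_le_iff_one_le_mul₀ (hTpos τ hτ)).2 (by linarith [h σ hσ τ hτ])
  obtain ⟨τ₀, hτ₀⟩ := hT
  have hSpos : 0 < sInf S := (inv_pos.2 (hTpos τ₀ hτ₀)).trans_le (hinv τ₀ hτ₀)
  have : (sInf S)⁻¹ ≤ sInf T :=
    le_csInf ⟨τ₀, hτ₀⟩ fun τ hτ => (inv_le_comm₀ hSpos (hTpos τ hτ)).2 (hinv τ hτ)
  calc 1 = sInf S * (sInf S)⁻¹ := (mul_inv_cancel₀ hSpos.ne').symm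
    _ ≤ sInf S * sInf T := by gcongr

section SuccessiveMinima

variable {n : ℕ}

def succMinSet (Λ : Set (EuclideanSpace ℝ (Fin n))) (k : ℕ) : Set ℝ :=
  {σ : ℝ | 0 < σ ∧ ∃ v : Fin k → EuclideanSpace ℝ (Fin n),
    (∀ i, v i ∈ Λ) ∧ LinearIndependent ℝ v ∧ ∀ i, ‖v i‖ ≤ σ}

theorem succMin_eq_sInf (Λ : Set (EuclideanSpace ℝ (Fin n))) (k : ℕ) :
    succMin Λ k = sInf (succMinSet Λ k) := rfl

theorem succMinSet_nonempty {Λ : Set (EuclideanSpace ℝ (Fin n))} {k : ℕ}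
    {v : Fin k → EuclideanSpace ℝ (Fin n)} (hvΛ : ∀ i, v i ∈ Λ) (hv : LinearIndependent ℝ v) :
    (succMinSet Λ k).Nonempty :=
  ⟨1 + ∑ i, ‖v i‖, by positivity, v, hvΛ, hv, fun i =>
    (Finset.single_le_sum (fun j _ => norm_nonneg (v j)) (Finset.mem_univ i)).trans
      (le_add_of_nonneg_left zero_le_one)⟩

theorem one_le_succMin_mul_succMin {Λ Λ' : Set (EuclideanSpace ℝ (Fin n))} {k m : ℕ}
    (hΛ : (succMinSet Λ k).Nonempty) (hΛ' : (succMinSet Λ' m).Nonempty)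
    (h : ∀ (v : Fin k → EuclideanSpace ℝ (Fin n)) (w : Fin m → EuclideanSpace ℝ (Fin n)),
      (∀ i, v i ∈ Λ) → LinearIndependent ℝ v → (∀ j, w j ∈ Λ') → LinearIndependent ℝ w →
      ∃ i j, ∃ z : ℤ, z ≠ 0 ∧ ⟪w j, v i⟫ = z) :
    1 ≤ succMin Λ k * succMin Λ' m := by
  rw [succMin_eq_sInf, succMin_eq_sInf]
  refine one_le_sInf_mul_sInf hΛ hΛ' (fun τ hτ => hτ.1) ?_
  rintro σ ⟨-, v, hvΛ, hv, hvσ⟩ τ ⟨hτ, w, hwΛ, hw, hwτ⟩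
  obtain ⟨i, j, z, hz0, hz⟩ := h v w hvΛ hv hwΛ hw
  calc (1 : ℝ) ≤ |(z : ℝ)| := by exact_mod_cast Int.one_le_abs hz0
    _ = |⟪w j, v i⟫| := by rw [hz]
    _ ≤ ‖w j‖ * ‖v i‖ := abs_real_inner_le_norm _ _
    _ ≤ τ * σ := mul_le_mul (hwτ j) (hvσ i) (norm_nonneg _) hτ.le
    _ = σ * τ := mul_comm _ _

end SuccessiveMinima

theorem stmt1 (n r : ℕ) (B : Fin r → EuclideanSpace ℝ (Fin n))
    (hB : LinearIndependent ℝ B)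
    (Λ : Set (EuclideanSpace ℝ (Fin n)))
    (hΛ : Λ = ((Submodule.span ℤ (Set.range B) : Submodule ℤ
      (EuclideanSpace ℝ (Fin n))) : Set (EuclideanSpace ℝ (Fin n))))
    (Λdual : Set (EuclideanSpace ℝ (Fin n)))
    (hdual : Λdual = {x : EuclideanSpace ℝ (Fin n) |
      x ∈ Submodule.span ℝ (Set.range B) ∧ ∀ y ∈ Λ, ∃ m : ℤ, (⟪x, y⟫ : ℝ) = m})
    (k : ℕ) (hk1 : 1 ≤ k) (hkr : k ≤ r) :
    1 ≤ succMin Λ k * succMin Λdual (r - k + 1) := by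
  subst hΛ
  have : FiniteDimensional ℝ (span ℝ (range B)) := .span_of_finite ℝ (finite_range B)
  have hrank : finrank ℝ (span ℝ (range B)) = r := by
    rw [finrank_span_eq_card hB, Fintype.card_fin]
  obtain ⟨w, hwV, hwB⟩ := hB.exists_inner_eq_ite
  have hw_dual : ∀ i, w i ∈ Λdual := fun i => hdual ▸
    ⟨hwV i, fun y hy => exists_int_inner_of_mem_span_int
      (fun j => ⟨if i = j then 1 else 0, by rw [hwB]; split_ifs <;> simp⟩) hy⟩
  refine one_le_succMin_mul_succMin
    (succMinSet_nonempty (v := B ∘ Fin.castLE hkr) (fun i => subset_span (mem_range_self _))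
      (hB.comp _ (Fin.castLE_injective hkr)))
    (succMinSet_nonempty (v := w ∘ Fin.castLE (by omega)) (fun _ => hw_dual _)
      ((linearIndependent_of_inner_eq_ite hwB).comp _ (Fin.castLE_injective _))) ?_
  intro v u hvΛ hv huΛ hu
  rw [hdual] at huΛ
  obtain ⟨i, j, hij⟩ := exists_inner_ne_zero_of_finrank_lt hv hu
    (fun i => span_subset_span ℤ ℝ _ (hvΛ i)) (fun j => (huΛ j).1) (by omega)
  obtain ⟨z, hz⟩ := (huΛ j).2 (v i) (hvΛ i)
  exact ⟨i, j, z, by rintro rfl; simp [hz] at hij, hz⟩
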